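/- Fix an unsatisfiable CNF formula F with n variables and integers w, s ≥ 1 with 2^n ≥ s ≥ 6nw, and let k, the blocks B*_0,…,B*_{n−k} of [s*], the blocks B_0,…,B_{n−k} of [s], the bijection t, and the family 𝓗 be as defined. Then for every h ∈ 𝓗 and all u, v ∈ Dom(h)∖{0}: (1) h(u) ≠ 0 and h(v) ≠ 0; (2) if L*(h(v)) ∈ Img(h), then h^{−1}(L*(h(v))) < v; (3) if R*(h(v)) ∈ Img(h), then h^{−1}(R*(h(v))) < v. -/

import Mathlib

/-! ## Clauses, CNFs and Resolution -/

/-- A clause over variables of type `α`: a finite set of literals `(x, b)`,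
where `(x, true)` is the positive literal `X` and `(x, false)` is `¬X`. -/
abbrev Clause (α : Type) := Finset (α × Bool)

/-- A clause is non-tautological if it contains no variable together with its negation. -/
def Clause.Nontaut {α : Type} (C : Clause α) : Prop :=
  ∀ x : α, ¬((x, true) ∈ C ∧ (x, false) ∈ C)

/-- A Resolution refutation of the set of clauses `F`: a nonempty sequence of
non-tautological clauses, each of which is a weakening (i.e. a superset) of a clause
of `F`, or a weakening of a resolvent `(D_v ∖ {X}) ∪ (D_w ∖ {¬X})` of two earlier
clauses `D_v, D_w` with `X ∈ D_v` and `¬X ∈ D_w`; the last clause is empty.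
The length of the refutation is the length of the list. -/
def IsResRefutation {α : Type} [DecidableEq α] (F : Set (Clause α)) (P : List (Clause α)) : Prop :=
  P ≠ [] ∧
  (∀ u : Fin P.length,
      Clause.Nontaut (P.get u) ∧
      ((∃ C ∈ F, C ⊆ P.get u) ∨
        ∃ v w : Fin P.length, (v : ℕ) < (u : ℕ) ∧ (w : ℕ) < (u : ℕ) ∧ ∃ x : α,
          (x, true) ∈ P.get v ∧ (x, false) ∈ P.get w ∧
          ((P.get v).erase (x, true) ∪ (P.get w).erase (x, false)) ⊆ P.get u)) ∧
  P.getLast? = some (∅ : Clause α)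

/-- Satisfiability of a set of clauses. -/
def CnfSat {α : Type} (S : Set (Clause α)) : Prop :=
  ∃ a : α → Bool, ∀ C ∈ S, ∃ l ∈ C, a l.1 = l.2

/-- The size of a CNF: the sum of the sizes (numbers of literals) of its clauses. -/
noncomputable def cnfSize {α : Type} (S : Set (Clause α)) : ℕ :=
  ∑ᶠ C ∈ S, Finset.card C

/-! ## Restrictions (partial assignments) -/

/-- The restriction (partial assignment) `ρ` satisfies the clause `C` (i.e. `C↾ρ = 1`). -/
def Clause.SatByR {α : Type} (ρ : α → Option Bool) (C : Clause α) : Prop :=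
  ∃ l ∈ C, ρ l.1 = some l.2

/-- The restriction `ρ` falsifies the clause `C` (i.e. `C↾ρ = 0`). -/
def Clause.FalsByR {α : Type} (ρ : α → Option Bool) (C : Clause α) : Prop :=
  ∀ l ∈ C, ρ l.1 = some (!l.2)

/-- The clause `C↾ρ` (relevant when `C` is neither satisfied nor falsified):
remove from `C` all falsified literals. -/
def Clause.restrictBy {α : Type} [DecidableEq α] (ρ : α → Option Bool) (C : Clause α) :
    Clause α :=
  C.filter (fun l => ρ l.1 ≠ some (!l.2))

/-- `F↾ρ` for a set of clauses `F`: it contains `C↾ρ` for those `C ∈ F` neither satisfied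
nor falsified by `ρ`, together with the empty clause if some `C ∈ F` is falsified by `ρ`. -/
def cnfRestrict {α : Type} [DecidableEq α] (ρ : α → Option Bool) (S : Set (Clause α)) :
    Set (Clause α) :=
  { E | ∃ C ∈ S, ¬Clause.SatByR ρ C ∧ ¬Clause.FalsByR ρ C ∧ E = Clause.restrictBy ρ C } ∪
  { E | E = (∅ : Clause α) ∧ ∃ C ∈ S, Clause.FalsByR ρ C }

open scoped Classical in
/-- `Π↾ρ` for a sequence of clauses: remove the satisfied clauses (the `1`s) and replace
the falsified ones (the `0`s) by the empty clause. -/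
noncomputable def seqRestrict {α : Type} [DecidableEq α] (ρ : α → Option Bool)
    (P : List (Clause α)) : List (Clause α) :=
  (P.filter (fun C => decide (¬Clause.SatByR ρ C))).map
    (fun C => if Clause.FalsByR ρ C then (∅ : Clause α) else Clause.restrictBy ρ C)

/-- The partial assignment `σ` extends the partial assignment `ρ`. -/
def optExtends {α : Type} (ρ σ : α → Option Bool) : Prop :=
  ∀ x b, ρ x = some b → σ x = some b

/-! ## CNFs with an explicit enumeration of clauses -/

/-- A CNF formula with variables `X_1, …, X_n` (indices in `Finset.Icc 1 n`) given with an
explicit enumeration `Cl 1, …, Cl m` of its clauses. -/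
structure CNFFam where
  n : ℕ
  m : ℕ
  Cl : ℕ → Clause ℕ

namespace CNFFam

/-- Well-formedness: the clauses `C_1, …, C_m` are non-tautological, pairwise distinct
(they enumerate a set of clauses), and use only the variables `X_1, …, X_n`. -/
def WF (F : CNFFam) : Prop :=
  (∀ j ∈ Finset.Icc 1 F.m, Clause.Nontaut (F.Cl j) ∧ ∀ l ∈ F.Cl j, l.1 ∈ Finset.Icc 1 F.n) ∧
  (∀ j ∈ Finset.Icc 1 F.m, ∀ j' ∈ Finset.Icc 1 F.m, F.Cl j = F.Cl j' → j = j')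

/-- The underlying set of clauses. -/
def clauseSet (F : CNFFam) : Set (Clause ℕ) :=
  { C | ∃ j ∈ Finset.Icc 1 F.m, C = F.Cl j }

/-- `F` is satisfiable. -/
def Sat (F : CNFFam) : Prop := CnfSat F.clauseSet

/-- `F` is a 3-CNF: all clauses have size at most 3. -/
def Is3CNF (F : CNFFam) : Prop := ∀ j ∈ Finset.Icc 1 F.m, (F.Cl j).card ≤ 3

end CNFFam

/-! ## The variables of the formulas REF and RREF -/

/-- The propositional variables of `REF(F,s)` and `RREF(F,s)`. -/
inductive RefVar : Type where
  | D (u i : ℕ) (b : Bool)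
  | V (u i : ℕ)
  | I (u j : ℕ)
  | L (u v : ℕ)
  | R (u v : ℕ)
  | P (u : ℕ)
deriving DecidableEq

abbrev VClause := Clause RefVar

/-- The index mentioned by a variable: `D[u,i,b], V[u,i], I[u,j], L[u,v], R[u,v], P[u]`
all mention the index `u`. -/
def RefVar.idx : RefVar → ℕ
  | .D u _ _ => u
  | .V u _ => u
  | .I u _ => u
  | .L u _ => u
  | .R u _ => u
  | .P u => u

/-- The positive literal on a variable. -/
def pLit (x : RefVar) : RefVar × Bool := (x, true)

/-- The negative literal on a variable. -/
def nLit (x : RefVar) : RefVar × Bool := (x, false)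

/-- The index-width of a clause: the number of indices mentioned by its variables. -/
def idxWidth (C : VClause) : ℕ := (C.image (fun l => RefVar.idx l.1)).card

/-! ## The clauses of REF and RREF -/

namespace Ref

/-- (A1) `V[u,0] ∨ V[u,1] ∨ ⋯ ∨ V[u,n]`. -/
def A1 (F : CNFFam) (A : Finset ℕ) : Set VClause :=
  { C | ∃ u ∈ A, C = (Finset.range (F.n + 1)).image (fun i => pLit (.V u i)) }

/-- (A2) `I[u,0] ∨ I[u,1] ∨ ⋯ ∨ I[u,m]`. -/
def A2 (F : CNFFam) (A : Finset ℕ) : Set VClause :=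
  { C | ∃ u ∈ A, C = (Finset.range (F.m + 1)).image (fun j => pLit (.I u j)) }

/-- (A3) `L[u,0] ∨ L[u,1] ∨ ⋯ ∨ L[u,s]` (disjunction over the index set and 0). -/
def A3 (A : Finset ℕ) : Set VClause :=
  { C | ∃ u ∈ A, C = (insert 0 A).image (fun v => pLit (.L u v)) }

/-- (A4) `R[u,0] ∨ R[u,1] ∨ ⋯ ∨ R[u,s]`. -/
def A4 (A : Finset ℕ) : Set VClause :=
  { C | ∃ u ∈ A, C = (insert 0 A).image (fun v => pLit (.R u v)) }

/-- (A5) `¬V[u,i] ∨ ¬V[u,i']`, `i ≠ i'`. -/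
def A5 (F : CNFFam) (A : Finset ℕ) : Set VClause :=
  { C | ∃ u ∈ A, ∃ i ∈ Finset.range (F.n + 1), ∃ i' ∈ Finset.range (F.n + 1),
      i ≠ i' ∧ C = {nLit (.V u i), nLit (.V u i')} }

/-- (A6) `¬I[u,j] ∨ ¬I[u,j']`, `j ≠ j'`. -/
def A6 (F : CNFFam) (A : Finset ℕ) : Set VClause :=
  { C | ∃ u ∈ A, ∃ j ∈ Finset.range (F.m + 1), ∃ j' ∈ Finset.range (F.m + 1),
      j ≠ j' ∧ C = {nLit (.I u j), nLit (.I u j')} }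

/-- (A7) `¬L[u,v] ∨ ¬L[u,v']`, `v ≠ v'`. -/
def A7 (A : Finset ℕ) : Set VClause :=
  { C | ∃ u ∈ A, ∃ v ∈ insert 0 A, ∃ v' ∈ insert 0 A,
      v ≠ v' ∧ C = {nLit (.L u v), nLit (.L u v')} }

/-- (A8) `¬R[u,v] ∨ ¬R[u,v']`, `v ≠ v'`. -/
def A8 (A : Finset ℕ) : Set VClause :=
  { C | ∃ u ∈ A, ∃ v ∈ insert 0 A, ∃ v' ∈ insert 0 A,
      v ≠ v' ∧ C = {nLit (.R u v), nLit (.R u v')} }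

/-- (A9) `¬I[u,0] ∨ ¬V[u,0]`. -/
def A9 (A : Finset ℕ) : Set VClause := { C | ∃ u ∈ A, C = {nLit (.I u 0), nLit (.V u 0)} }

/-- (A10) `I[u,0] ∨ V[u,0]`. -/
def A10 (A : Finset ℕ) : Set VClause := { C | ∃ u ∈ A, C = {pLit (.I u 0), pLit (.V u 0)} }

/-- (A11) `¬I[u,0] ∨ ¬L[u,0]`. -/
def A11 (A : Finset ℕ) : Set VClause := { C | ∃ u ∈ A, C = {nLit (.I u 0), nLit (.L u 0)} }

/-- (A12) `¬I[u,0] ∨ ¬R[u,0]`. -/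
def A12 (A : Finset ℕ) : Set VClause := { C | ∃ u ∈ A, C = {nLit (.I u 0), nLit (.R u 0)} }

/-- (A13) `¬L[u,v]` for `u ≤ v`. -/
def A13 (A : Finset ℕ) : Set VClause :=
  { C | ∃ u ∈ A, ∃ v ∈ A, u ≤ v ∧ C = {nLit (.L u v)} }

/-- (A14) `¬R[u,v]` for `u ≤ v`. -/
def A14 (A : Finset ℕ) : Set VClause :=
  { C | ∃ u ∈ A, ∃ v ∈ A, u ≤ v ∧ C = {nLit (.R u v)} }

/-- (A15) `¬L[u,v] ∨ ¬V[u,i] ∨ D[v,i,0]`. -/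
def A15 (F : CNFFam) (A : Finset ℕ) : Set VClause :=
  { C | ∃ u ∈ A, ∃ v ∈ A, ∃ i ∈ Finset.Icc 1 F.n,
      C = {nLit (.L u v), nLit (.V u i), pLit (.D v i false)} }

/-- (A16) `¬R[u,v] ∨ ¬V[u,i] ∨ D[v,i,1]`. -/
def A16 (F : CNFFam) (A : Finset ℕ) : Set VClause :=
  { C | ∃ u ∈ A, ∃ v ∈ A, ∃ i ∈ Finset.Icc 1 F.n,
      C = {nLit (.R u v), nLit (.V u i), pLit (.D v i true)} }

/-- (A17) `¬L[u,v] ∨ ¬V[u,i] ∨ ¬D[v,i',b] ∨ D[u,i',b]`, `i' ≠ i`. -/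
def A17 (F : CNFFam) (A : Finset ℕ) : Set VClause :=
  { C | ∃ u ∈ A, ∃ v ∈ A, ∃ i ∈ Finset.Icc 1 F.n, ∃ i' ∈ Finset.Icc 1 F.n, ∃ b : Bool,
      i' ≠ i ∧ C = {nLit (.L u v), nLit (.V u i), nLit (.D v i' b), pLit (.D u i' b)} }

/-- (A18) `¬R[u,v] ∨ ¬V[u,i] ∨ ¬D[v,i',b] ∨ D[u,i',b]`, `i' ≠ i`. -/
def A18 (F : CNFFam) (A : Finset ℕ) : Set VClause :=
  { C | ∃ u ∈ A, ∃ v ∈ A, ∃ i ∈ Finset.Icc 1 F.n, ∃ i' ∈ Finset.Icc 1 F.n, ∃ b : Bool,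
      i' ≠ i ∧ C = {nLit (.R u v), nLit (.V u i), nLit (.D v i' b), pLit (.D u i' b)} }

/-- (A19) `¬I[u,j] ∨ D[u,i,b]` for `X_i^{(b)} ∈ C_j`. -/
def A19 (F : CNFFam) (A : Finset ℕ) : Set VClause :=
  { C | ∃ u ∈ A, ∃ j ∈ Finset.Icc 1 F.m, ∃ i : ℕ, ∃ b : Bool,
      (i, b) ∈ F.Cl j ∧ C = {nLit (.I u j), pLit (.D u i b)} }

/-- (A20) `¬D[u,i,0] ∨ ¬D[u,i,1]`. -/
def A20 (F : CNFFam) (A : Finset ℕ) : Set VClause :=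
  { C | ∃ u ∈ A, ∃ i ∈ Finset.Icc 1 F.n, C = {nLit (.D u i false), nLit (.D u i true)} }

/-- (A21) `¬D[s,i,b]` (for the last index `t`). -/
def A21 (F : CNFFam) (t : ℕ) : Set VClause :=
  { C | ∃ i ∈ Finset.Icc 1 F.n, ∃ b : Bool, C = {nLit (.D t i b)} }

/-- (A22) `¬P[u] ∨ ¬L[u,v] ∨ P[v]`. -/
def A22 (A : Finset ℕ) : Set VClause :=
  { C | ∃ u ∈ A, ∃ v ∈ A, C = {nLit (.P u), nLit (.L u v), pLit (.P v)} }

/-- (A23) `¬P[u] ∨ ¬R[u,v] ∨ P[v]`. -/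
def A23 (A : Finset ℕ) : Set VClause :=
  { C | ∃ u ∈ A, ∃ v ∈ A, C = {nLit (.P u), nLit (.R u v), pLit (.P v)} }

/-- (A24) `P[s]` (for the last index `t`). -/
def A24 (t : ℕ) : Set VClause := { C | C = {pLit (.P t)} }

end Ref

/-- The formula `REF(F, A)` with index set `A` (in place of `[s]`) and last index `t`
(in the role of `s`): the clauses (A1)–(A21). -/
def REFA (F : CNFFam) (A : Finset ℕ) (t : ℕ) : Set VClause :=
  Ref.A1 F A ∪ Ref.A2 F A ∪ Ref.A3 A ∪ Ref.A4 A ∪ Ref.A5 F A ∪ Ref.A6 F A ∪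
    Ref.A7 A ∪ Ref.A8 A ∪ Ref.A9 A ∪ Ref.A10 A ∪ Ref.A11 A ∪ Ref.A12 A ∪ Ref.A13 A ∪
    Ref.A14 A ∪ Ref.A15 F A ∪ Ref.A16 F A ∪ Ref.A17 F A ∪ Ref.A18 F A ∪ Ref.A19 F A ∪
    Ref.A20 F A ∪ Ref.A21 F t

/-- The formula `REF(F, s)`. -/
def REF (F : CNFFam) (s : ℕ) : Set VClause := REFA F (Finset.Icc 1 s) s

/-- Relativization of a clause: add the literal `¬P[u]` for every index `u` mentioned
by a variable occurring in the clause. -/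
def relCl (C : VClause) : VClause :=
  C ∪ (C.image (fun l => RefVar.idx l.1)).image (fun u => nLit (.P u))

/-- The formula `RREF(F, s)`: the relativized clauses of `REF(F,s)` together with the
clauses (A22), (A23) and (A24). -/
def RREF (F : CNFFam) (s : ℕ) : Set VClause :=
  (relCl '' REF F s) ∪ Ref.A22 (Finset.Icc 1 s) ∪ Ref.A23 (Finset.Icc 1 s) ∪ Ref.A24 s

/-- `REF(F,s)` with the clauses of types (A7) and (A8) deleted. -/
def REFnoLR (F : CNFFam) (s : ℕ) : Set VClause :=
  Ref.A1 F (Finset.Icc 1 s) ∪ Ref.A2 F (Finset.Icc 1 s) ∪ Ref.A3 (Finset.Icc 1 s) ∪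
    Ref.A4 (Finset.Icc 1 s) ∪ Ref.A5 F (Finset.Icc 1 s) ∪ Ref.A6 F (Finset.Icc 1 s) ∪
    Ref.A9 (Finset.Icc 1 s) ∪ Ref.A10 (Finset.Icc 1 s) ∪ Ref.A11 (Finset.Icc 1 s) ∪
    Ref.A12 (Finset.Icc 1 s) ∪ Ref.A13 (Finset.Icc 1 s) ∪ Ref.A14 (Finset.Icc 1 s) ∪
    Ref.A15 F (Finset.Icc 1 s) ∪ Ref.A16 F (Finset.Icc 1 s) ∪ Ref.A17 F (Finset.Icc 1 s) ∪
    Ref.A18 F (Finset.Icc 1 s) ∪ Ref.A19 F (Finset.Icc 1 s) ∪ Ref.A20 F (Finset.Icc 1 s) ∪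
    Ref.A21 F s

/-- `RREF'(F,s)`: obtained from `RREF(F,s)` by deleting the (relativized) clauses of
types (A7) and (A8). -/
def RREF' (F : CNFFam) (s : ℕ) : Set VClause :=
  (relCl '' REFnoLR F s) ∪ Ref.A22 (Finset.Icc 1 s) ∪ Ref.A23 (Finset.Icc 1 s) ∪ Ref.A24 s

/-! ## Refutations as structures -/

/-- A structure `(D, V, I, L, R)` of the type of a length-`s` refutation. -/
structure RefStruct where
  Dr : ℕ → ℕ → Bool → Bool
  Vf : ℕ → ℕ
  If' : ℕ → ℕ
  Lf : ℕ → ℕ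
  Rf : ℕ → ℕ

namespace RefStruct

/-- The typing conditions: `D ⊆ [s]×[n]×B`, `V : [s] → [n]∪{0}`, `I : [s] → [m]∪{0}`,
`L, R : [s] → [s]∪{0}`. -/
def WFOn (M : RefStruct) (s n m : ℕ) : Prop :=
  (∀ u i b, M.Dr u i b = true → u ∈ Finset.Icc 1 s ∧ i ∈ Finset.Icc 1 n) ∧
  (∀ u ∈ Finset.Icc 1 s, M.Vf u ≤ n) ∧
  (∀ u ∈ Finset.Icc 1 s, M.If' u ≤ m) ∧
  (∀ u ∈ Finset.Icc 1 s, M.Lf u ≤ s) ∧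
  (∀ u ∈ Finset.Icc 1 s, M.Rf u ≤ s)

/-- (R1)–(R8): the structure is a refutation of `F` of length `s`. -/
def IsRefutationOf (M : RefStruct) (F : CNFFam) (s : ℕ) : Prop :=
  ∀ u ∈ Finset.Icc 1 s,
    ((M.Vf u = 0 ∨ M.If' u = 0) ∧ ¬(M.Vf u = 0 ∧ M.If' u = 0)) ∧
    (M.If' u = 0 → M.Lf u ≠ 0 ∧ M.Rf u ≠ 0) ∧
    (M.Lf u < u ∧ M.Rf u < u) ∧
    (∀ i ∈ Finset.Icc 1 F.n, ∀ v ∈ Finset.Icc 1 s,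
      (M.Vf u = i → M.Lf u = v → M.Dr v i false = true) ∧
      (M.Vf u = i → M.Rf u = v → M.Dr v i true = true) ∧
      (∀ i' ∈ Finset.Icc 1 F.n, ∀ b : Bool,
        M.Vf u = i → i ≠ i' → M.Lf u = v → M.Dr v i' b = true → M.Dr u i' b = true) ∧
      (∀ i' ∈ Finset.Icc 1 F.n, ∀ b : Bool,
        M.Vf u = i → i ≠ i' → M.Rf u = v → M.Dr v i' b = true → M.Dr u i' b = true)) ∧
    (∀ j ∈ Finset.Icc 1 F.m, ∀ i : ℕ, ∀ b : Bool,
      M.If' u = j → (i, b) ∈ F.Cl j → M.Dr u i b = true) ∧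
    (∀ i ∈ Finset.Icc 1 F.n, ¬(M.Dr u i false = true ∧ M.Dr u i true = true)) ∧
    (∀ i ∈ Finset.Icc 1 F.n, ∀ b : Bool, M.Dr s i b = false)

/-- The truth assignment associated to a structure. -/
def assign (M : RefStruct) : RefVar → Bool
  | .D u i b => M.Dr u i b
  | .V u i => M.Vf u == i
  | .I u j => M.If' u == j
  | .L u v => M.Lf u == v
  | .R u v => M.Rf u == v
  | .P _ => true

end RefStruct

/-! ## The full-tree refutation -/

/-- The level `h` of the node numbered `u` in the full binary tree with `n+1` levels. -/
def levelOf (n u : ℕ) : ℕ := Nat.log 2 (2 ^ (n + 1) - u)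

/-- The value (position within its level, `a₁` most significant) of the node numbered `u`. -/
def valOf (n u : ℕ) : ℕ := u - (2 ^ (n + 1) + 1 - 2 ^ (levelOf n u + 1))

/-- The `i`-th bit `a_i` of the binary string `a` labelling the node numbered `u`. -/
def digitOf (n u i : ℕ) : Bool := (valOf n u).testBit (levelOf n u - i)

/-- The clause `C_a = X_1^{(a_1)} ∨ ⋯ ∨ X_n^{(a_n)}` labelling the leaf numbered `u`. -/
def leafClause (F : CNFFam) (u : ℕ) : Clause ℕ :=
  (Finset.Icc 1 F.n).image (fun i => (i, digitOf F.n u i))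

/-- The full-tree Resolution refutation `(D*, V*, I*, L*, R*)` of `F`,
of length `s* = 2^{n+1} - 1`. -/
noncomputable def fullTree (F : CNFFam) : RefStruct where
  Dr := fun u i b =>
    decide (1 ≤ u ∧ u ≤ 2 ^ (F.n + 1) - 1 ∧ 1 ≤ i ∧ i ≤ levelOf F.n u) &&
      (digitOf F.n u i == b)
  Vf := fun u =>
    if 1 ≤ u ∧ u ≤ 2 ^ (F.n + 1) - 1 ∧ levelOf F.n u < F.n then levelOf F.n u + 1 else 0
  If' := fun u =>
    if 1 ≤ u ∧ u ≤ 2 ^ (F.n + 1) - 1 ∧ levelOf F.n u = F.n then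
      sInf { j : ℕ | j ∈ Finset.Icc 1 F.m ∧ F.Cl j ⊆ leafClause F u }
    else 0
  Lf := fun u =>
    if 1 ≤ u ∧ u ≤ 2 ^ (F.n + 1) - 1 ∧ levelOf F.n u < F.n then
      2 ^ (F.n + 1) + 1 + 2 * valOf F.n u - 2 ^ (levelOf F.n u + 2)
    else 0
  Rf := fun u =>
    if 1 ≤ u ∧ u ≤ 2 ^ (F.n + 1) - 1 ∧ levelOf F.n u < F.n then
      2 ^ (F.n + 1) + 2 + 2 * valOf F.n u - 2 ^ (levelOf F.n u + 2)
    else 0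

/-! ## Blocks, the family 𝓗, and conditions -/

/-- The integer `k` with `2^k < 3w ≤ 2^{k+1}`. -/
def kOf (w : ℕ) : ℕ := Nat.log 2 (3 * w - 1)

/-- The block `B*_i` of `[s*]`, `s* = 2^{n+1} - 1`. -/
def Bstar (n w i : ℕ) : Finset ℕ :=
  let s' := 2 ^ (n + 1) - 1
  let k := kOf w
  if i = 0 then Finset.Icc (s' - 2 ^ (k + 1) + 2) s'
  else Finset.Icc (s' + 2 - 2 ^ (k + 1 + i)) (s' - 2 ^ (k + i) + 1)

/-- The block `B_i` of `[s]`. -/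
def Bblk (n s w i : ℕ) : Finset ℕ :=
  let k := kOf w
  if i = 0 then Finset.Icc (s - 2 ^ (k + 1) + 2) s
  else if i = n - k then Finset.Icc 1 (s - 2 ^ (k + 1) * (n - k) + 1)
  else Finset.Icc (s - 2 ^ (k + 1) * (i + 1) + 2) (s - 2 ^ (k + 1) * i + 1)

/-- The bijection `t : B_0 → B*_0`, `t(u) = u - s + s*`. -/
def tmap (n s u : ℕ) : ℕ := u + (2 ^ (n + 1) - 1 - s)

/-- `h` (a set of pairs) is a partial function. -/
def pfun (h : Finset (ℕ × ℕ)) : Prop :=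
  ∀ p ∈ h, ∀ q ∈ h, p.1 = q.1 → p.2 = q.2

/-- The domain of a partial function given as a set of pairs. -/
def pdom (h : Finset (ℕ × ℕ)) : Finset ℕ := h.image Prod.fst

/-- The image of a partial function given as a set of pairs. -/
def pimg (h : Finset (ℕ × ℕ)) : Finset ℕ := h.image Prod.snd

/-- Membership in the family `𝓗`: injective partial functions
`h : [s]∪{0} → [s*]∪{0}` satisfying (H1)–(H4). -/
def memH (n s w : ℕ) (h : Finset (ℕ × ℕ)) : Prop :=
  pfun h ∧
  (∀ p ∈ h, p.1 ∈ insert 0 (Finset.Icc 1 s) ∧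
    p.2 ∈ insert 0 (Finset.Icc 1 (2 ^ (n + 1) - 1))) ∧
  (∀ p ∈ h, ∀ q ∈ h, p.2 = q.2 → p.1 = q.1) ∧
  ((0, 0) ∈ h) ∧
  (∀ p ∈ h, p.1 ∈ Bblk n s w 0 → p.2 = tmap n s p.1) ∧
  (∀ p ∈ h, ∀ i ∈ Finset.Icc 1 (n - kOf w), p.1 ∈ Bblk n s w i → p.2 ∈ Bstar n w i)

/-- `∂I = {L*(u) | u ∈ I∖{0}} ∪ {R*(u) | u ∈ I∖{0}}`. -/
noncomputable def bnd (F : CNFFam) (I : Finset ℕ) : Finset ℕ :=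
  (I.erase 0).image (fullTree F).Lf ∪ (I.erase 0).image (fullTree F).Rf

/-- A condition: a pair `p = (g, h)` of members of `𝓗` with (C1) `g ⊆ h` and
(C2) `Img(h) = Img(g) ∪ ∂Img(g)`. -/
def IsCond (F : CNFFam) (s w : ℕ) (g h : Finset (ℕ × ℕ)) : Prop :=
  memH F.n s w g ∧ memH F.n s w h ∧ g ⊆ h ∧ pimg h = pimg g ∪ bnd F (pimg g)

/-- Application of a partial function given as a set of pairs. -/
noncomputable def papp (g : Finset (ℕ × ℕ)) (u : ℕ) : ℕ := sInf { v : ℕ | (u, v) ∈ g }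

/-- Inverse application of an (injective) partial function given as a set of pairs. -/
noncomputable def pinv (h : Finset (ℕ × ℕ)) (y : ℕ) : ℕ := sInf { u : ℕ | (u, y) ∈ h }

/-- The partial assignment `α(p)` determined by a condition `p = (g, h)`: it is defined
precisely on the variables (of `REF(F,s)`) mentioning some `u ∈ Dom(g) ∖ {0}`, where it is
read off from the full-tree refutation through `g` (and `h` for the `L`- and `R`-variables). -/
noncomputable def alphaP (F : CNFFam) (g h : Finset (ℕ × ℕ)) : RefVar → Option Bool :=
  fun x =>
    if RefVar.idx x ∈ (pdom g).erase 0 then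
      match x with
      | RefVar.D u i b => some ((fullTree F).assign (RefVar.D (papp g u) i b))
      | RefVar.V u i => some ((fullTree F).assign (RefVar.V (papp g u) i))
      | RefVar.I u j => some ((fullTree F).assign (RefVar.I (papp g u) j))
      | RefVar.L u v => some (decide (v = pinv h ((fullTree F).Lf (papp g u))))
      | RefVar.R u v => some (decide (v = pinv h ((fullTree F).Rf (papp g u))))
      | RefVar.P _ => none
    else none

open scoped Classical in
/-- The restriction `p↾I` of a condition `p = (g,h)`: `g'` is the restriction of `g` to
`I ∪ {0}` and `h'` is the restriction of `h` with image `Img(g') ∪ ∂Img(g')`. -/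
noncomputable def condRestrict (F : CNFFam) (g h : Finset (ℕ × ℕ)) (I : Finset ℕ) :
    Finset (ℕ × ℕ) × Finset (ℕ × ℕ) :=
  let g' := g.filter (fun p => p.1 ∈ insert 0 I)
  let h' := h.filter (fun p => p.2 ∈ pimg g' ∪ bnd F (pimg g'))
  (g', h')

/-!
`h` sends each block `B_i`, `i ≥ 1`, into the level `k + i` of the full tree, and `B_0` by the
order-preserving shift `t` into the levels `≤ k`. A nonzero `L*(x)` or `R*(x)` is a child of `x`:
it lies one level lower and has a smaller number. So if `h(v) = x` and `h(y)` is a child of `x`,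
then either `v, y ∈ B_0` and `y < v` because `t` preserves order, or `y` lies in a block of
larger index than `v`, and blocks of larger index consist of smaller numbers.
-/

lemma levelOf_eq_iff {n u ℓ : ℕ} (hu : u < 2 ^ (n + 1)) :
    levelOf n u = ℓ ↔ 2 ^ ℓ ≤ 2 ^ (n + 1) - u ∧ 2 ^ (n + 1) - u < 2 ^ (ℓ + 1) :=
  Nat.log_eq_iff (Or.inr ⟨one_lt_two, by omega⟩)

/-- The candidate child `y` of `x` satisfies `2^{n+1} - y = 2 (2^{n+1} - x) + 2 - c`. -/
lemma levelOf_child {n x c : ℕ} (hx1 : 1 ≤ x) (hx2 : x ≤ 2 ^ (n + 1) - 1)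
    (hlev : levelOf n x < n) (hc1 : 1 ≤ c) (hc2 : c ≤ 2) :
    2 ^ (n + 1) + c + 2 * valOf n x - 2 ^ (levelOf n x + 2) < x ∧
      levelOf n (2 ^ (n + 1) + c + 2 * valOf n x - 2 ^ (levelOf n x + 2)) =
        levelOf n x + 1 := by
  have hpos : 1 ≤ 2 ^ (n + 1) := Nat.one_le_two_pow
  obtain ⟨hd1, hd2⟩ := (levelOf_eq_iff (by omega : x < 2 ^ (n + 1))).mp rfl
  have e3 : 2 ^ (levelOf n x + 2) ≤ 2 ^ (n + 1) := Nat.pow_le_pow_right two_pos (by omega)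
  have hval : valOf n x = x - (2 ^ (n + 1) + 1 - 2 ^ (levelOf n x + 1)) := rfl
  have e1 : 2 ^ (levelOf n x + 1) = 2 * 2 ^ levelOf n x := by ring
  have e2 : 2 ^ (levelOf n x + 2) = 4 * 2 ^ levelOf n x := by ring
  rw [hval, levelOf_eq_iff (by omega)]
  omega

lemma fullTree_Lf_spec (F : CNFFam) {x : ℕ} (hx : (fullTree F).Lf x ≠ 0) :
    (fullTree F).Lf x < x ∧ levelOf F.n ((fullTree F).Lf x) = levelOf F.n x + 1 := by
  simp only [fullTree] at hx ⊢
  split_ifs at hx ⊢ with hcond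
  · exact levelOf_child hcond.1 hcond.2.1 hcond.2.2 le_rfl one_le_two
  · exact absurd rfl hx

lemma fullTree_Rf_spec (F : CNFFam) {x : ℕ} (hx : (fullTree F).Rf x ≠ 0) :
    (fullTree F).Rf x < x ∧ levelOf F.n ((fullTree F).Rf x) = levelOf F.n x + 1 := by
  simp only [fullTree] at hx ⊢
  split_ifs at hx ⊢ with hcond
  · exact levelOf_child hcond.1 hcond.2.1 hcond.2.2 one_le_two le_rfl
  · exact absurd rfl hx

lemma two_pow_kOf_lt {w : ℕ} (hw : 1 ≤ w) : 2 ^ kOf w < 3 * w :=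
  lt_of_le_of_lt (Nat.pow_log_le_self 2 (by omega)) (by omega)

lemma kOf_lt {n w s : ℕ} (hn : 1 ≤ n) (hw : 1 ≤ w) (hlow : 6 * n * w ≤ s) (hhigh : s ≤ 2 ^ n) :
    kOf w < n := by
  have := two_pow_kOf_lt hw
  have : 3 * w ≤ 6 * n * w := by nlinarith
  exact (Nat.pow_lt_pow_iff_right one_lt_two).mp (by omega)

lemma blocks_fit {n w s : ℕ} (hn : 1 ≤ n) (hw : 1 ≤ w) (hlow : 6 * n * w ≤ s) :
    2 ^ (kOf w + 1) * (n - kOf w) + 2 ≤ s := by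
  have hk := two_pow_kOf_lt hw
  have hK : 2 ^ (kOf w + 1) ≤ 6 * w - 2 := by rw [pow_succ]; omega
  have hsub : 2 ^ (kOf w + 1) * (n - kOf w) ≤ (6 * w - 2) * n :=
    Nat.mul_le_mul hK (Nat.sub_le _ _)
  calc 2 ^ (kOf w + 1) * (n - kOf w) + 2 ≤ (6 * w - 2) * n + 2 * n := by omega
    _ = 6 * n * w := by
        rw [← add_mul, Nat.sub_add_cancel (by omega)]
        ring
    _ ≤ s := hlow

lemma levelOf_le_of_mem_Bstar_zero {n w x : ℕ} (hx : x ∈ Bstar n w 0) :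
    levelOf n x ≤ kOf w := by
  simp only [Bstar, if_pos, Finset.mem_Icc] at hx
  have hpos : 1 ≤ 2 ^ (n + 1) := Nat.one_le_two_pow
  exact Nat.lt_succ_iff.mp (Nat.log_lt_of_lt_pow (by omega) (by omega))

lemma levelOf_of_mem_Bstar {n w i x : ℕ} (hi : i ≠ 0) (hin : kOf w + i ≤ n)
    (hx : x ∈ Bstar n w i) : levelOf n x = kOf w + i := by
  simp only [Bstar, if_neg hi, Finset.mem_Icc] at hx
  have e1 : 2 ^ (kOf w + 1 + i) = 2 * 2 ^ (kOf w + i) := by ring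
  have e2 : 2 ^ (kOf w + i + 1) ≤ 2 ^ (n + 1) := Nat.pow_le_pow_right two_pos (by omega)
  rw [levelOf_eq_iff (by omega)]
  omega

lemma tmap_mem_Bstar_zero {n s w u : ℕ} (hs : s ≤ 2 ^ (n + 1) - 1) (hu : u ∈ Bblk n s w 0) :
    tmap n s u ∈ Bstar n w 0 := by
  simp only [Bblk, Bstar, if_pos, Finset.mem_Icc, tmap] at hu ⊢
  omega

section Blocks

variable {n s w : ℕ}

lemma le_of_mem_Bblk {j v : ℕ} (hj : j ≠ 0) (hv : v ∈ Bblk n s w j) :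
    v ≤ s - 2 ^ (kOf w + 1) * j + 1 := by
  simp only [Bblk, if_neg hj] at hv
  split_ifs at hv with hlast
  · subst hlast; exact (Finset.mem_Icc.mp hv).2
  · exact (Finset.mem_Icc.mp hv).2

lemma le_of_mem_Bblk_of_lt {i u : ℕ} (hi : i < n - kOf w) (hu : u ∈ Bblk n s w i) :
    s - 2 ^ (kOf w + 1) * (i + 1) + 2 ≤ u := by
  simp only [Bblk, Nat.ne_of_lt hi, if_false] at hu
  split_ifs at hu with hi0
  · subst hi0; simpa using (Finset.mem_Icc.mp hu).1
  · exact (Finset.mem_Icc.mp hu).1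

lemma lt_of_mem_Bblk_of_lt (hKs : 2 ^ (kOf w + 1) * (n - kOf w) + 2 ≤ s) {i j u v : ℕ}
    (hij : i < j) (hj : j ≤ n - kOf w) (hu : u ∈ Bblk n s w i) (hv : v ∈ Bblk n s w j) :
    v < u := by
  have hv' := le_of_mem_Bblk (by omega) hv
  have hu' := le_of_mem_Bblk_of_lt (by omega) hu
  have h1 : 2 ^ (kOf w + 1) * (i + 1) ≤ 2 ^ (kOf w + 1) * j := Nat.mul_le_mul_left _ hij
  have h2 : 2 ^ (kOf w + 1) * j ≤ 2 ^ (kOf w + 1) * (n - kOf w) := Nat.mul_le_mul_left _ hj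
  omega

end Blocks

/-- Every `v ∈ [s]` lies in the block `B_q`, `q = min((s + 1 - v) / 2^{k+1}, n - k)`. -/
lemma exists_mem_Bblk {n s w : ℕ} (hkn : kOf w < n)
    (hKs : 2 ^ (kOf w + 1) * (n - kOf w) + 2 ≤ s) {v : ℕ} (hv1 : 1 ≤ v) (hvs : v ≤ s) :
    ∃ i ≤ n - kOf w, v ∈ Bblk n s w i := by
  obtain ⟨q, hq⟩ : ∃ q, q = (s + 1 - v) / 2 ^ (kOf w + 1) := ⟨_, rfl⟩
  have hdiv := Nat.div_add_mod (s + 1 - v) (2 ^ (kOf w + 1))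
  have hmod := Nat.mod_lt (s + 1 - v) (Nat.two_pow_pos (kOf w + 1))
  rw [← hq] at hdiv
  rcases Nat.eq_zero_or_pos q with hq0 | hq0
  · refine ⟨0, Nat.zero_le _, ?_⟩
    simp only [Bblk, if_pos, Finset.mem_Icc]
    rw [hq0, mul_zero] at hdiv
    have := Nat.le_mul_of_pos_right (2 ^ (kOf w + 1)) (by omega : 0 < n - kOf w)
    omega
  by_cases hlast : n - kOf w ≤ q
  · refine ⟨n - kOf w, le_rfl, ?_⟩
    simp only [Bblk, if_neg (by omega : n - kOf w ≠ 0), if_pos, Finset.mem_Icc]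
    have := Nat.mul_le_mul_left (2 ^ (kOf w + 1)) hlast
    omega
  · refine ⟨q, by omega, ?_⟩
    simp only [Bblk, if_neg hq0.ne', if_neg (by omega : q ≠ n - kOf w), Finset.mem_Icc]
    have h1 := Nat.mul_le_mul_left (2 ^ (kOf w + 1)) (by omega : q + 1 ≤ n - kOf w)
    rw [mul_add_one] at h1 ⊢
    omega

namespace memH

variable {n s w : ℕ} {h : Finset (ℕ × ℕ)}

lemma eq_zero_of_snd_eq_zero (hh : memH n s w h) {u : ℕ} (hu : (u, 0) ∈ h) : u = 0 :=
  hh.2.2.1 _ hu _ hh.2.2.2.1 rfl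

lemma snd_eq_zero_of_fst_eq_zero (hh : memH n s w h) {x : ℕ} (hx : (0, x) ∈ h) : x = 0 :=
  hh.1 _ hx _ hh.2.2.2.1 rfl

lemma snd_ne_zero (hh : memH n s w h) {u x : ℕ} (hux : (u, x) ∈ h) (hu : u ≠ 0) : x ≠ 0 := by
  rintro rfl
  exact hu (hh.eq_zero_of_snd_eq_zero hux)

lemma exists_mem_Bblk (hh : memH n s w h) (hkn : kOf w < n)
    (hKs : 2 ^ (kOf w + 1) * (n - kOf w) + 2 ≤ s) {u x : ℕ} (hux : (u, x) ∈ h) (hu : u ≠ 0) :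
    ∃ i ≤ n - kOf w, u ∈ Bblk n s w i := by
  have hdom := (hh.2.1 _ hux).1
  simp only [Finset.mem_insert, Finset.mem_Icc] at hdom
  exact _root_.exists_mem_Bblk hkn hKs (by omega) (by omega)

lemma lt_of_levelOf_eq_succ (hh : memH n s w h) (hkn : kOf w < n)
    (hKs : 2 ^ (kOf w + 1) * (n - kOf w) + 2 ≤ s) (hs : s ≤ 2 ^ (n + 1) - 1) {v x y z : ℕ}
    (hvx : (v, x) ∈ h) (hyz : (y, z) ∈ h) (hv : v ≠ 0) (hy : y ≠ 0) (hzx : z < x)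
    (hlev : levelOf n z = levelOf n x + 1) : y < v := by
  obtain ⟨i, hi, hvi⟩ := hh.exists_mem_Bblk hkn hKs hvx hv
  obtain ⟨j, hj, hyj⟩ := hh.exists_mem_Bblk hkn hKs hyz hy
  obtain ⟨-, -, -, -, hB0, hB⟩ := hh
  have hlevel : ∀ u t l, (u, t) ∈ h → l ≠ 0 → l ≤ n - kOf w → u ∈ Bblk n s w l →
      levelOf n t = kOf w + l := fun u t l hut hl hln hul =>
    levelOf_of_mem_Bstar hl (by omega) (hB _ hut l (Finset.mem_Icc.mpr ⟨by omega, hln⟩) hul)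
  rcases Nat.eq_zero_or_pos j with rfl | hj0
  · have hz : z = tmap n s y := hB0 _ hyz hyj
    have hzk := levelOf_le_of_mem_Bstar_zero (hz ▸ tmap_mem_Bstar_zero hs hyj)
    obtain rfl : i = 0 := by
      by_contra hi0
      have := hlevel _ _ _ hvx hi0 hi hvi
      omega
    have hx : x = tmap n s v := hB0 _ hvx hvi
    simp only [tmap] at hz hx
    omega
  · refine lt_of_mem_Bblk_of_lt hKs ?_ hj hvi hyj
    rcases Nat.eq_zero_or_pos i with rfl | hi0
    · exact hj0
    · have := hlevel _ _ _ hvx hi0.ne' hi hvi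
      have := hlevel _ _ _ hyz hj0.ne' hj hyj
      omega

lemma lt_of_mem_child (hh : memH n s w h) (hkn : kOf w < n)
    (hKs : 2 ^ (kOf w + 1) * (n - kOf w) + 2 ≤ s) (hs : s ≤ 2 ^ (n + 1) - 1) {f : ℕ → ℕ}
    (hf : ∀ x, f x ≠ 0 → f x < x ∧ levelOf n (f x) = levelOf n x + 1) {v x y : ℕ}
    (hvx : (v, x) ∈ h) (hv : v ≠ 0) (hy : (y, f x) ∈ h) : y < v := by
  by_cases hfx : f x = 0
  · rw [hfx] at hy
    rw [hh.eq_zero_of_snd_eq_zero hy]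
    exact Nat.pos_of_ne_zero hv
  · have hy0 : y ≠ 0 := by
      rintro rfl
      exact hfx (hh.snd_eq_zero_of_fst_eq_zero hy)
    exact hh.lt_of_levelOf_eq_succ hkn hKs hs hvx hy hv hy0 (hf x hfx).1 (hf x hfx).2

end memH

theorem claim_obvious_general (F : CNFFam) (w s : ℕ)
    (hn : 1 ≤ F.n) (hw : 1 ≤ w)
    (hlow : 6 * F.n * w ≤ s) (hhigh : s ≤ 2 ^ F.n)
    (h : Finset (ℕ × ℕ)) (hh : memH F.n s w h) :
    (∀ u x, (u, x) ∈ h → u ≠ 0 → x ≠ 0) ∧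
    (∀ v x, (v, x) ∈ h → v ≠ 0 → ∀ y, (y, (fullTree F).Lf x) ∈ h → y < v) ∧
    (∀ v x, (v, x) ∈ h → v ≠ 0 → ∀ y, (y, (fullTree F).Rf x) ∈ h → y < v) := by
  have hkn : kOf w < F.n := kOf_lt hn hw hlow hhigh
  have hKs := blocks_fit hn hw hlow
  have hs : s ≤ 2 ^ (F.n + 1) - 1 := by rw [pow_succ]; omega
  exact ⟨fun _ _ => hh.snd_ne_zero,
    fun _ _ hvx hv _ => hh.lt_of_mem_child hkn hKs hs (fun _ => fullTree_Lf_spec F) hvx hv,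
    fun _ _ hvx hv _ => hh.lt_of_mem_child hkn hKs hs (fun _ => fullTree_Rf_spec F) hvx hv⟩

/-- Claim 1: for an unsatisfiable CNF `F` with `n` variables, integers `w, s ≥ 1` with
`2^n ≥ s ≥ 6nw`, and every `h ∈ 𝓗` and `u, v ∈ Dom(h) ∖ {0}`:
(1) `h(u) ≠ 0` (and `h(v) ≠ 0`);
(2) if `L*(h(v)) ∈ Img(h)` then `h⁻¹(L*(h(v))) < v`;
(3) if `R*(h(v)) ∈ Img(h)` then `h⁻¹(R*(h(v))) < v`. -/
theorem claim_obvious (F : CNFFam) (hWF : F.WF) (hunsat : ¬F.Sat) (w s : ℕ)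
    (hn : 1 ≤ F.n) (hw : 1 ≤ w) (hs : 1 ≤ s)
    (hlow : 6 * F.n * w ≤ s) (hhigh : s ≤ 2 ^ F.n)
    (h : Finset (ℕ × ℕ)) (hh : memH F.n s w h) :
    (∀ u x, (u, x) ∈ h → u ≠ 0 → x ≠ 0) ∧
    (∀ v x, (v, x) ∈ h → v ≠ 0 → ∀ y, (y, (fullTree F).Lf x) ∈ h → y < v) ∧
    (∀ v x, (v, x) ∈ h → v ≠ 0 → ∀ y, (y, (fullTree F).Rf x) ∈ h → y < v) :=
  claim_obvious_general F w s hn hw hlow hhigh h hh
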